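/- arXiv:2106.14796 — 2 statements merged into one kernel-verified Lean document; each statement's English description precedes it below -/
import Mathlib

section
/- Let L = ⊕_{i≥1} L_i be a graded Lie algebra satisfying the covering property with L_1 = span{x,y}. Let m > 1, and suppose w spans the one-dimensional component L_{m-1}, L_{m+1} ≠ 0, and [[w,x],x] = 0 = [[w,x],y]. Then [w,x] = 0. -/
/-- A diamond of type `0` must be fake: if `w` spans the one-dimensional component
`L_{m-1}`, `L_{m+1} ≠ 0`, and `[w,x]` is centralized by both generators, then `[w,x] = 0`. -/
theorem type_zero_diamond_is_fake {F M : Type*} [Field F] [LieRing M] [LieAlgebra F M]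
    (L : ℕ → Submodule F M) (x y w : M) (m : ℕ)
    (hgrade : ∀ i j, ∀ a ∈ L i, ∀ b ∈ L j, ⁅a, b⁆ ∈ L (i + j))
    (hL1 : L 1 = Submodule.span F {x, y})
    (hcov : ∀ i, 1 ≤ i → ∀ z ∈ L i, z ≠ 0 →
      L (i + 1) = Submodule.span F {u | ∃ a ∈ L 1, u = ⁅z, a⁆})
    (hm : 1 < m)
    (hw : w ≠ 0)
    (hspan : L (m - 1) = Submodule.span F {w})
    (hnext : L (m + 1) ≠ ⊥)
    (hwxx : ⁅⁅w, x⁆, x⁆ = 0)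
    (hwxy : ⁅⁅w, x⁆, y⁆ = 0) :
    ⁅w, x⁆ = 0 := by
  by_contra h
  have hwm1 : w ∈ L (m - 1) := hspan ▸ Submodule.mem_span_singleton_self w
  have hx1 : x ∈ L 1 := hL1 ▸ Submodule.subset_span (Or.inl rfl)
  have hwx : ⁅w, x⁆ ∈ L m := by
    have := hgrade (m - 1) 1 w hwm1 x hx1
    rwa [Nat.sub_add_cancel hm.le] at this
  have hkey := hcov m hm.le ⁅w, x⁆ hwx h
  apply hnext
  rw [hkey, Submodule.span_eq_bot]
  rintro u ⟨a, ha, rfl⟩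
  rw [hL1, Submodule.mem_span_pair] at ha
  obtain ⟨c, d, rfl⟩ := ha
  simp [lie_add, lie_smul, hwxx, hwxy]
end

section
/- Let L = ⊕_{i≥1} L_i be a graded Lie algebra over a field, generated by L_1 = span{x,y}, satisfying the covering property, and suppose [[a,y],y] = 0 for all a ∈ L. Then no two consecutive homogeneous components L_m and L_{m+1} with m ≥ 2 can both be two-dimensional, provided L_{m+2} ≠ 0. -/
/-- In a graded Lie algebra generated by `L_1 = span{x,y}` with the covering property
and `(ad y)^2 = 0`, no two consecutive components of degree `≥ 2` can both be
two-dimensional (provided `L_{m+2} ≠ 0`). -/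
theorem no_consecutive_diamonds {F M : Type*} [Field F] [LieRing M] [LieAlgebra F M]
    (L : ℕ → Submodule F M) (x y : M)
    (hgrade : ∀ i j, ∀ a ∈ L i, ∀ b ∈ L j, ⁅a, b⁆ ∈ L (i + j))
    (hL1 : L 1 = Submodule.span F {x, y})
    (hgen : LieSubalgebra.lieSpan F M {x, y} = ⊤)
    (hcov : ∀ i, 1 ≤ i → ∀ z ∈ L i, z ≠ 0 →
      L (i + 1) = Submodule.span F {u | ∃ a ∈ L 1, u = ⁅z, a⁆})
    (hyy : ∀ a : M, ⁅⁅a, y⁆, y⁆ = 0) :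
    ∀ m, 2 ≤ m → L (m + 2) ≠ ⊥ →
      ¬(Module.rank F (L m) = 2 ∧ Module.rank F (L (m + 1)) = 2) := by
  rintro m hm hbot ⟨hm2, hm12⟩
  have hx : x ∈ L 1 := by rw [hL1]; exact Submodule.subset_span (by simp)
  have hy : y ∈ L 1 := by rw [hL1]; exact Submodule.subset_span (by simp)
  -- Key consequence of the covering property:
  have key : ∀ i, 1 ≤ i → ∀ z ∈ L i, z ≠ 0 →
      L (i + 1) ≤ Submodule.span F {⁅z, x⁆, ⁅z, y⁆} := by
    intro i hi z hz hz0
    rw [hcov i hi z hz hz0]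
    refine Submodule.span_le.2 ?_
    rintro u ⟨a, ha, rfl⟩
    rw [hL1] at ha
    obtain ⟨c, d, rfl⟩ := Submodule.mem_span_pair.1 ha
    exact Submodule.mem_span_pair.2 ⟨c, d, by simp [lie_add, lie_smul]⟩
  have h1m : (1 : ℕ) ≤ m := by omega
  -- `ad y` is injective on `L m`
  have hyinj : ∀ z ∈ L m, z ≠ 0 → ⁅z, y⁆ ≠ 0 := by
    intro z hz hz0 hzy
    have hle : L (m + 1) ≤ Submodule.span F {⁅z, x⁆} := by
      refine (key m h1m z hz hz0).trans ?_
      refine Submodule.span_le.2 ?_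
      intro u hu
      rcases hu with rfl | hu
      · exact Submodule.subset_span rfl
      · rcases hu with rfl
        rw [hzy]; exact zero_mem _
    have hle1 : Module.rank F (L (m + 1)) ≤ 1 := by
      refine (Submodule.rank_mono hle).trans ?_
      refine (rank_span_le _).trans ?_
      simp
    rw [hm12] at hle1
    norm_num at hle1
  -- the map `ad y : L m → L (m+1)`
  let f : L m →ₗ[F] L (m + 1) :=
    { toFun := fun z => ⟨⁅(z : M), y⁆, hgrade m 1 z z.2 y hy⟩
      map_add' := by intro a b; ext; simp [add_lie]
      map_smul' := by intro c a; ext; simp [smul_lie] }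
  have hfinj : Function.Injective f := by
    rw [← LinearMap.ker_eq_bot]
    refine (Submodule.eq_bot_iff _).2 ?_
    intro z hzker
    by_contra hz0
    have hzM : (z : M) ≠ 0 := fun h => hz0 (Subtype.ext h)
    have : ⁅(z : M), y⁆ = 0 := congrArg Subtype.val hzker
    exact hyinj z z.2 hzM this
  -- finiteness and surjectivity of f
  have fin1 : Module.Finite F (L m) :=
    Module.finite_of_rank_eq_nat (n := 2) (by rw [hm2]; norm_num)
  have fin2 : Module.Finite F (L (m + 1)) :=
    Module.finite_of_rank_eq_nat (n := 2) (by rw [hm12]; norm_num)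
  have hfr1 : Module.finrank F (L m) = 2 :=
    Module.finrank_eq_of_rank_eq (n := 2) (by rw [hm2]; norm_num)
  have hfr2 : Module.finrank F (L (m + 1)) = 2 :=
    Module.finrank_eq_of_rank_eq (n := 2) (by rw [hm12]; norm_num)
  have hfsurj : Function.Surjective f := by
    rw [← LinearMap.range_eq_top]
    apply Submodule.eq_top_of_finrank_eq
    rw [LinearMap.finrank_range_of_inj hfinj, hfr1, hfr2]
  -- hence `⁅w, y⁆ = 0` for every `w ∈ L (m+1)`
  have hwy : ∀ w ∈ L (m + 1), ⁅w, y⁆ = 0 := by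
    intro w hw
    obtain ⟨z, hzw⟩ := hfsurj ⟨w, hw⟩
    have : ⁅(z : M), y⁆ = w := congrArg Subtype.val hzw
    rw [← this]
    exact hyy z
  -- a nonzero element of L (m+1)
  have hnt : Nontrivial (L (m + 1)) := by
    rw [← rank_pos_iff_nontrivial (R := F), hm12]
    norm_num
  obtain ⟨w0, hw0ne⟩ := exists_ne (0 : L (m + 1))
  have hw0M : (w0 : M) ≠ 0 := fun h => hw0ne (Subtype.ext h)
  -- L (m+2) is spanned by the single element ⁅w0, x⁆
  have hsmall : Module.rank F (L (m + 2)) ≤ 1 := by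
    have hle : L (m + 2) ≤ Submodule.span F {⁅(w0 : M), x⁆} := by
      have hk := key (m + 1) (by omega) w0 w0.2 hw0M
      refine le_trans (by exact hk) ?_
      refine Submodule.span_le.2 ?_
      intro u hu
      rcases hu with rfl | hu
      · exact Submodule.subset_span rfl
      · rcases hu with rfl
        rw [hwy w0 w0.2]; exact zero_mem _
    refine (Submodule.rank_mono hle).trans ?_
    refine (rank_span_le _).trans ?_
    simp
  -- the map `ad x : L (m+1) → L (m+2)` is injective
  let g : L (m + 1) →ₗ[F] L (m + 2) :=
    { toFun := fun w => ⟨⁅(w : M), x⁆, hgrade (m + 1) 1 w w.2 x hx⟩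
      map_add' := by intro a b; ext; simp [add_lie]
      map_smul' := by intro c a; ext; simp [smul_lie] }
  have hginj : Function.Injective g := by
    rw [← LinearMap.ker_eq_bot]
    refine (Submodule.eq_bot_iff _).2 ?_
    intro w hwker
    by_contra hw0
    have hwM : (w : M) ≠ 0 := fun h => hw0 (Subtype.ext h)
    have hwx : ⁅(w : M), x⁆ = 0 := congrArg Subtype.val hwker
    have hk := key (m + 1) (by omega) w w.2 hwM
    have : L (m + 2) = ⊥ := by
      rw [eq_bot_iff]
      refine le_trans (by exact hk) ?_
      rw [hwx, hwy w w.2]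
      simp
    exact hbot this
  have hbig : (2 : Cardinal) ≤ Module.rank F (L (m + 2)) := by
    rw [← hm12]
    exact LinearMap.rank_le_of_injective g hginj
  exact absurd (hbig.trans hsmall) (by norm_num)
end
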